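/- arXiv:1401.6976 — 4 statements merged into one kernel-verified Lean document; each statement's English description precedes it below -/
import Mathlib

section
/- Let c ∈ (0, c_crit), let I ⊆ ℝ be an open interval containing -c/2, and let f : I → ℝ be a solution of Jang's equation on L_c with f(-c/2) = f'(-c/2) = 0. Then the function h : γ(I) → ℝ defined by h(s) = f'(γ⁻¹(s)) / √(1 + f'(γ⁻¹(s))²), where γ(u) = (2/c)u + 1 and γ⁻¹(s) = c(s-1)/2, is a solution of the transformed Jang equation dh/ds = F_c(s, h(s)) on γ(I), satisfies h(0) = 0, and satisfies |h(s)| < 1 for all s ∈ γ(I). -/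
/-- The function `φ(r) = e^{r/(2m)-1}(r - 2m)` defining the Kruskal radius implicitly. -/
noncomputable def phi (m r : ℝ) : ℝ := Real.exp (r / (2*m) - 1) * (r - 2*m)

/-- The derivative `φ_r(r) = (r/(2m)) e^{r/(2m)-1}`. -/
noncomputable def phiR (m r : ℝ) : ℝ := (r / (2*m)) * Real.exp (r / (2*m) - 1)

/-- The critical parameter `c_crit = √(8m/e)`. -/
noncomputable def cCrit (m : ℝ) : ℝ := Real.sqrt (8*m / Real.exp 1)

/-- The right-hand side of Jang's equation on the slice `L_c`:
`f''(u) = jangRHS m c u r (f'(u))` where `r = r(u)` solves `φ(r) = u(u+c)`. -/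
noncomputable def jangRHS (m c u r p : ℝ) : ℝ :=
  c * Real.sqrt (2*m / phiR m r + p^2/4) *
      ((1 / phiR m r) * (1/(2*m) - 3/r) - p^2/(2*m*r))
    - ((2*u + c)/(4*m*r)) * p^3
    - ((2*u + c)/(2 * phiR m r)) * (1/(2*m) + 5/r) * p

/-- The right-hand side `F_c(s,h)` of the transformed Jang equation,
with `r = r_c(s)` solving `φ(r) = (c²/4)(s²-1)`. -/
noncomputable def Fc (m c s r h : ℝ) : ℝ :=
  (c^2/2) * Real.sqrt (2*m*(1 - h^2) / phiR m r + h^2/4) *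
      (((1 - h^2) / phiR m r) * (1/(2*m) - 3/r) - h^2/(2*m*r))
    - (c^2*s/(8*m*r)) * h^3
    - (c^2*s/(4 * phiR m r)) * (1/(2*m) + 5/r) * (h*(1 - h^2))


/-!
With `u = c(s-1)/2` one has `u(u+c) = (c²/4)(s²-1)`, so `r(u) = r_c(s)` because `φ` is injective
on `(0,∞)`. The chain rule gives `h' = (c/2) f''/(1+f'²)^{3/2}`, and substituting
`1 - h² = 1/(1+f'²)` into `F_c` turns it into exactly this expression.
-/

open Real

lemma phi_hasDerivAt {m : ℝ} (hm : m ≠ 0) (r : ℝ) : HasDerivAt (phi m) (phiR m r) r := by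
  have hlin : HasDerivAt (fun x : ℝ => x / (2*m) - 1) (1/(2*m)) r :=
    ((hasDerivAt_id r).div_const (2*m)).sub_const 1
  refine (hlin.exp.mul ((hasDerivAt_id r).sub_const (2*m))).congr_deriv ?_
  simp only [id_eq, phiR]
  field_simp
  ring

lemma phiR_pos {m r : ℝ} (hm : 0 < m) (hr : 0 < r) : 0 < phiR m r := by
  unfold phiR
  positivity

lemma phi_strictMonoOn (m : ℝ) (hm : 0 < m) : StrictMonoOn (phi m) (Set.Ioi 0) := by
  refine strictMonoOn_of_deriv_pos (convex_Ioi 0)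
    (fun r _ => (phi_hasDerivAt hm.ne' r).continuousAt.continuousWithinAt) fun r hr => ?_
  rw [interior_Ioi] at hr
  rw [(phi_hasDerivAt hm.ne' r).deriv]
  exact phiR_pos hm hr

lemma abs_div_sqrt_one_add_sq_lt_one (p : ℝ) : |p / √(1 + p^2)| < 1 := by
  have hq : 0 < √(1 + p^2) := sqrt_pos.2 (by positivity)
  rw [abs_div, abs_of_pos hq, div_lt_one hq, ← sqrt_sq_eq_abs]
  exact sqrt_lt_sqrt (sq_nonneg p) (by linarith)

lemma HasDerivAt.div_sqrt_one_add_sq {g : ℝ → ℝ} {g' x : ℝ} (hg : HasDerivAt g g' x) :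
    HasDerivAt (fun t => g t / √(1 + g t ^ 2)) (g' / √(1 + g x ^ 2) ^ 3) x := by
  set q := √(1 + g x ^ 2)
  have hq : 0 < q := sqrt_pos.2 (by positivity)
  have hq2 : q ^ 2 = 1 + g x ^ 2 := sq_sqrt (by positivity)
  have hden : HasDerivAt (fun t => √(1 + g t ^ 2)) (2 * g x * g' / (2 * q)) x := by
    have hpos : 0 < 1 + g x ^ 2 := by positivity
    simpa [mul_comm, mul_assoc] using ((hg.pow 2).const_add 1).sqrt hpos.ne'
  refine (hg.div hden hq.ne').congr_deriv ?_
  field_simp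
  linear_combination g' * q ^ 2 * hq2

lemma Fc_div_sqrt_one_add_sq (m c s r p : ℝ) (hm : 0 < m) (hr : 0 < r) :
    Fc m c s r (p / √(1 + p^2)) = jangRHS m c (c*(s-1)/2) r p * (c/2) / √(1 + p^2) ^ 3 := by
  have hF := phiR_pos hm hr
  set q := √(1 + p^2)
  have hq : 0 < q := sqrt_pos.2 (by positivity)
  have hq2 : q^2 = 1 + p^2 := sq_sqrt (by positivity)
  have hsub : 1 - (p/q)^2 = 1/q^2 := by
    rw [div_pow, hq2]
    field_simp
    ring
  have hroot : 2*m*(1/q^2) / phiR m r + (p/q)^2/4 = (2*m / phiR m r + p^2/4) / q^2 := by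
    field_simp
  unfold Fc jangRHS
  rw [hsub, hroot, sqrt_div (by positivity), sqrt_sq hq.le]
  field_simp
  ring

theorem jang_to_transformed_general (m c : ℝ) (hm : 0 < m)
    (R Rc : ℝ → ℝ)
    (hR : ∀ u, 0 < R u ∧ phi m (R u) = u * (u + c))
    (hRc : ∀ s, 0 < Rc s ∧ phi m (Rc s) = c^2/4 * (s^2 - 1))
    (I : Set ℝ)
    (f' : ℝ → ℝ)
    (hf' : ∀ u ∈ I, HasDerivAt f' (jangRHS m c u (R u) (f' u)) u)
    (hinit' : f' (-c/2) = 0) :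
    (fun s => f' (c*(s-1)/2) / Real.sqrt (1 + (f' (c*(s-1)/2))^2)) 0 = 0 ∧
    ∀ s, c*(s-1)/2 ∈ I →
      HasDerivAt (fun t => f' (c*(t-1)/2) / Real.sqrt (1 + (f' (c*(t-1)/2))^2))
        (Fc m c s (Rc s) (f' (c*(s-1)/2) / Real.sqrt (1 + (f' (c*(s-1)/2))^2))) s ∧
      |f' (c*(s-1)/2) / Real.sqrt (1 + (f' (c*(s-1)/2))^2)| < 1 := by
  refine ⟨by simp [hinit'], fun s hs => ?_⟩
  have hradius : R (c*(s-1)/2) = Rc s :=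
    (phi_strictMonoOn m hm).injOn (hR _).1 (hRc s).1 (by rw [(hR _).2, (hRc s).2]; ring)
  have hγ : HasDerivAt (fun t : ℝ => c*(t-1)/2) (c/2) s := by
    simpa using (((hasDerivAt_id s).sub_const 1).const_mul c).div_const 2
  refine ⟨((hf' _ hs).comp s hγ).div_sqrt_one_add_sq.congr_deriv ?_,
    abs_div_sqrt_one_add_sq_lt_one _⟩
  rw [Fc_div_sqrt_one_add_sq m c s (Rc s) _ hm (hRc s).1, hradius, Function.comp_apply]

/-- If `f` solves Jang's equation on an open interval `I ∋ -c/2` with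
`f(-c/2) = f'(-c/2) = 0`, then `h(s) = f'(γ⁻¹(s))/√(1 + f'(γ⁻¹(s))²)` (with
`γ⁻¹(s) = c(s-1)/2`) solves the transformed Jang equation on `γ(I)`, satisfies
`h(0) = 0`, and `|h(s)| < 1` there. -/
theorem jang_to_transformed (m c : ℝ) (hm : 0 < m) (hc : c ∈ Set.Ioo 0 (cCrit m))
    (R Rc : ℝ → ℝ)
    (hR : ∀ u, 0 < R u ∧ phi m (R u) = u * (u + c))
    (hRc : ∀ s, 0 < Rc s ∧ phi m (Rc s) = c^2/4 * (s^2 - 1))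
    (I : Set ℝ) (hIopen : IsOpen I) (hIconn : I.OrdConnected) (hmem : -c/2 ∈ I)
    (f f' : ℝ → ℝ)
    (hf : ∀ u ∈ I, HasDerivAt f (f' u) u)
    (hf' : ∀ u ∈ I, HasDerivAt f' (jangRHS m c u (R u) (f' u)) u)
    (hinit : f (-c/2) = 0) (hinit' : f' (-c/2) = 0) :
    (fun s => f' (c*(s-1)/2) / Real.sqrt (1 + (f' (c*(s-1)/2))^2)) 0 = 0 ∧
    ∀ s, c*(s-1)/2 ∈ I →
      HasDerivAt (fun t => f' (c*(t-1)/2) / Real.sqrt (1 + (f' (c*(t-1)/2))^2))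
        (Fc m c s (Rc s) (f' (c*(s-1)/2) / Real.sqrt (1 + (f' (c*(s-1)/2))^2))) s ∧
      |f' (c*(s-1)/2) / Real.sqrt (1 + (f' (c*(s-1)/2))^2)| < 1 :=
  jang_to_transformed_general m c hm R Rc hR hRc I f' hf' hinit'
end

section
/- For every c ∈ (0, c_crit): r_c(s) ≤ 2m for all s ∈ [-1, 1], with r_c(s) = 2m if and only if s = ±1; moreover the minimal value r_c(0) satisfies r_c(0) ≤ √(e·m·(c_crit² - c²)), so r_c(0) → 0 as c → c_crit. -/
/-!
Since `φ(r)` has the sign of `r - 2m` and the right-hand side `(c²/4)(s² - 1)` is nonpositive on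
`[-1, 1]`, vanishing exactly at `s = ±1`, the radius stays inside the horizon and touches it only
at the endpoints. At `s = 0`, writing `x = r/(2m) ∈ [0, 1]`, the equation reads
`eˣ(1 - x) = e c²/(8m)`; the elementary bound `eˣ(1 - x) ≤ 1 - x²/2` then turns it into
`r² ≤ 8m² - e m c² = e m (c_crit² - c²)`.
-/

open Filter Topology Set

lemma phi_nonpos_iff (m r : ℝ) : phi m r ≤ 0 ↔ r ≤ 2 * m := by
  rw [phi, ← neg_nonneg, ← mul_neg, mul_nonneg_iff_of_pos_left (Real.exp_pos _)]
  constructor <;> intro h <;> linarith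

lemma phi_eq_zero_iff (m r : ℝ) : phi m r = 0 ↔ r = 2 * m := by
  simp [phi, Real.exp_ne_zero, sub_eq_zero]

lemma Real.exp_mul_one_sub_le {x : ℝ} (h0 : 0 ≤ x) (h1 : x ≤ 1) :
    Real.exp x * (1 - x) ≤ 1 - x ^ 2 / 2 := by
  have hb := Real.exp_bound' h0 h1 (n := 3) (by norm_num)
  norm_num [Finset.sum_range_succ, Nat.factorial] at hb
  nlinarith [pow_nonneg h0 3, pow_nonneg h0 4]

lemma sq_le_four_mul_add_exp_one_mul_phi (m r : ℝ) (hm : 0 < m) (hr0 : 0 ≤ r) (hr : r ≤ 2 * m) :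
    r ^ 2 ≤ 4 * m * (2 * m + Real.exp 1 * phi m r) := by
  obtain ⟨x, rfl⟩ : ∃ x, r = 2 * m * x := ⟨r / (2 * m), by field_simp⟩
  have hx := Real.exp_mul_one_sub_le (x := x) (by nlinarith) (by nlinarith)
  have hphi : Real.exp 1 * phi m (2 * m * x) = 2 * m * (Real.exp x * (x - 1)) := by
    rw [phi, ← mul_assoc, ← Real.exp_add, mul_div_cancel_left₀ x (by positivity)]
    ring_nf
  rw [hphi]
  nlinarith [mul_le_mul_of_nonneg_left hx (by positivity : (0 : ℝ) ≤ 8 * m ^ 2)]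

lemma exp_one_mul_cCrit_sq {m : ℝ} (hm : 0 ≤ m) : Real.exp 1 * cCrit m ^ 2 = 8 * m := by
  rw [cCrit, Real.sq_sqrt (by positivity)]
  field_simp

lemma tendsto_sqrt_cCrit_sq_sub_sq (m : ℝ) :
    Tendsto (fun c => √(Real.exp 1 * m * (cCrit m ^ 2 - c ^ 2))) (𝓝 (cCrit m)) (𝓝 0) := by
  have hcont : Continuous fun c : ℝ => √(Real.exp 1 * m * (cCrit m ^ 2 - c ^ 2)) := by
    fun_prop
  simpa using hcont.tendsto (cCrit m)

/-- For every `c ∈ (0, c_crit)`: `r_c(s) ≤ 2m` on `[-1,1]` with equality iff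
`s = ±1`; moreover `r_c(0) ≤ √(em(c_crit² - c²))`, hence `r_c(0) → 0` as `c → c_crit`. -/
theorem rc_inside_horizon (m : ℝ) (hm : 0 < m) (Rc : ℝ → ℝ → ℝ)
    (hRc : ∀ c ∈ Set.Ioo 0 (cCrit m), ∀ s, 0 < Rc c s ∧
      phi m (Rc c s) = c^2/4 * (s^2 - 1)) :
    (∀ c ∈ Set.Ioo 0 (cCrit m),
      (∀ s ∈ Set.Icc (-1:ℝ) 1, Rc c s ≤ 2*m ∧ (Rc c s = 2*m ↔ s = 1 ∨ s = -1)) ∧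
      Rc c 0 ≤ Real.sqrt (Real.exp 1 * m * ((cCrit m)^2 - c^2))) ∧
    Filter.Tendsto (fun c => Rc c 0)
      (nhdsWithin (cCrit m) (Set.Ioo 0 (cCrit m))) (nhds 0) := by
  have inside : ∀ c ∈ Ioo 0 (cCrit m), ∀ s ∈ Icc (-1 : ℝ) 1,
      Rc c s ≤ 2 * m ∧ (Rc c s = 2 * m ↔ s = 1 ∨ s = -1) := by
    intro c hc s hs
    have hs2 : s ^ 2 ≤ 1 := (sq_le_one_iff_abs_le_one s).2 (abs_le.2 hs)
    have hc2 : c ^ 2 ≠ 0 := pow_ne_zero 2 hc.1.ne'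
    rw [← phi_nonpos_iff, ← phi_eq_zero_iff, (hRc c hc s).2, ← sq_eq_one_iff]
    refine ⟨mul_nonpos_of_nonneg_of_nonpos (by positivity) (by linarith), ?_⟩
    simp [hc2, sub_eq_zero]
  have center : ∀ c ∈ Ioo 0 (cCrit m), Rc c 0 ≤ √(Real.exp 1 * m * (cCrit m ^ 2 - c ^ 2)) := by
    intro c hc
    obtain ⟨hr0, hphi⟩ := hRc c hc 0
    have h := sq_le_four_mul_add_exp_one_mul_phi m _ hm hr0.le (inside c hc 0 (by norm_num)).1
    refine Real.le_sqrt_of_sq_le ?_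
    have hcrit := exp_one_mul_cCrit_sq hm.le
    rw [hphi] at h
    nlinarith
  refine ⟨fun c hc => ⟨inside c hc, center c hc⟩, ?_⟩
  refine tendsto_of_tendsto_of_tendsto_of_le_of_le' tendsto_const_nhds
    ((tendsto_sqrt_cCrit_sq_sub_sq m).mono_left nhdsWithin_le_nhds) ?_ ?_
  · filter_upwards [self_mem_nhdsWithin] with c hc using (hRc c hc 0).1.le
  · filter_upwards [self_mem_nhdsWithin] with c hc using center c hc
end

section
/- Let A, B, δ, C, s₁ be positive real numbers, and suppose (1-h²)² - h³ ≥ C for all h ∈ [-1, 0]. Let g : [0, s₁] → [-1, 0] be differentiable with g(0) = 0 and g'(s) ≤ -B·((1-g(s)²)² - g(s)³)/(A·s + δ) for all s ∈ [0, s₁]. Then g(s) ≤ (B·C/A)·log(δ/(A·s + δ)) for all s ∈ [0, s₁]. -/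
/-! Along the solution, `(1 - g²)² - g³ ≥ C`, so `g' ≤ -BC/(As + δ)`. The right-hand side is the
derivative of `(BC/A) log (δ/(As + δ))`, which vanishes at `s = 0` like `g`, and the bound follows
by integrating the derivative inequality from `0`. -/

open Set Real

theorem le_of_hasDerivWithinAt_le_of_le_left {f f' φ φ' : ℝ → ℝ} {a b : ℝ}
    (hf : ∀ x ∈ Icc a b, HasDerivWithinAt f (f' x) (Icc a b) x)
    (hφ : ∀ x ∈ Icc a b, HasDerivWithinAt φ (φ' x) (Icc a b) x)
    (hderiv : ∀ x ∈ Ioo a b, f' x ≤ φ' x) (ha : f a ≤ φ a) :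
    ∀ x ∈ Icc a b, f x ≤ φ x := by
  have hdiff : ∀ x ∈ Icc a b, HasDerivWithinAt (fun x => f x - φ x) (f' x - φ' x) (Icc a b) x :=
    fun x hx => (hf x hx).sub (hφ x hx)
  have hanti : AntitoneOn (fun x => f x - φ x) (Icc a b) := by
    refine antitoneOn_of_hasDerivWithinAt_nonpos (f' := fun x => f' x - φ' x) (convex_Icc a b)
      (fun x hx => (hdiff x hx).continuousWithinAt) (fun x hx => ?_) (fun x hx => ?_)
    · rw [interior_Icc] at hx
      exact (hdiff x (Ioo_subset_Icc_self hx)).mono interior_subset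
    · rw [interior_Icc] at hx
      exact sub_nonpos.mpr (hderiv x hx)
  intro x hx
  have := hanti ⟨le_rfl, hx.1.trans hx.2⟩ hx hx.1
  linarith

theorem hasDerivAt_mul_log_sub_log_affine {A δ c x : ℝ} (hA : A ≠ 0) (hx : A * x + δ ≠ 0) :
    HasDerivAt (fun s => c / A * (log δ - log (A * s + δ))) (-c / (A * x + δ)) x := by
  have haff : HasDerivAt (fun s => A * s + δ) A x := by
    simpa using ((hasDerivAt_id x).const_mul A).add_const δ
  refine (((haff.log hx).const_sub (log δ)).const_mul (c / A)).congr_deriv ?_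
  field_simp

theorem separable_comparison_general (A B δ C s₁ : ℝ)
    (hA : 0 < A) (hB : 0 < B) (hδ : 0 < δ)
    (hCbound : ∀ x ∈ Set.Icc (-1:ℝ) 0, C ≤ (1 - x^2)^2 - x^3)
    (g g' : ℝ → ℝ)
    (hrange : ∀ s ∈ Set.Icc (0:ℝ) s₁, g s ∈ Set.Icc (-1:ℝ) 0)
    (hderiv : ∀ s ∈ Set.Icc (0:ℝ) s₁,
      HasDerivWithinAt g (g' s) (Set.Icc (0:ℝ) s₁) s)
    (hineq : ∀ s ∈ Set.Icc (0:ℝ) s₁,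
      g' s ≤ -B * ((1 - (g s)^2)^2 - (g s)^3) / (A*s + δ))
    (hinit : g 0 = 0) :
    ∀ s ∈ Set.Icc (0:ℝ) s₁, g s ≤ (B*C/A) * Real.log (δ / (A*s + δ)) := by
  have hpos : ∀ s ∈ Icc 0 s₁, 0 < A * s + δ := fun s hs =>
    add_pos_of_nonneg_of_pos (mul_nonneg hA.le hs.1) hδ
  have hslope : ∀ s ∈ Icc 0 s₁, g' s ≤ -(B * C) / (A * s + δ) := fun s hs =>
    (hineq s hs).trans <| div_le_div_of_nonneg_right
      (by nlinarith [hCbound _ (hrange s hs)]) (hpos s hs).le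
  have hcomp := le_of_hasDerivWithinAt_le_of_le_left hderiv
    (fun s hs => (hasDerivAt_mul_log_sub_log_affine (c := B * C) hA.ne'
      (hpos s hs).ne').hasDerivWithinAt)
    (fun s hs => hslope s (Ioo_subset_Icc_self hs)) (by simp [hinit])
  intro s hs
  rw [log_div hδ.ne' (hpos s hs).ne']
  exact hcomp s hs

/-- The separable ODE comparison estimate: if `g : [0,s₁] → [-1,0]` has
`g(0) = 0` and `g'(s) ≤ -B((1-g²)² - g³)/(As + δ)`, with `(1-h²)² - h³ ≥ C > 0` on
`[-1,0]`, then `g(s) ≤ (BC/A)·log(δ/(As + δ))` on `[0,s₁]`. -/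
theorem separable_comparison (A B δ C s₁ : ℝ)
    (hA : 0 < A) (hB : 0 < B) (hδ : 0 < δ) (hC : 0 < C) (hs₁ : 0 < s₁)
    (hCbound : ∀ x ∈ Set.Icc (-1:ℝ) 0, C ≤ (1 - x^2)^2 - x^3)
    (g g' : ℝ → ℝ)
    (hrange : ∀ s ∈ Set.Icc (0:ℝ) s₁, g s ∈ Set.Icc (-1:ℝ) 0)
    (hderiv : ∀ s ∈ Set.Icc (0:ℝ) s₁,
      HasDerivWithinAt g (g' s) (Set.Icc (0:ℝ) s₁) s)
    (hineq : ∀ s ∈ Set.Icc (0:ℝ) s₁,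
      g' s ≤ -B * ((1 - (g s)^2)^2 - (g s)^3) / (A*s + δ))
    (hinit : g 0 = 0) :
    ∀ s ∈ Set.Icc (0:ℝ) s₁, g s ≤ (B*C/A) * Real.log (δ / (A*s + δ)) :=
  separable_comparison_general A B δ C s₁ hA hB hδ hCbound g g' hrange hderiv hineq hinit
end

section
/- Let c ∈ (0, c_crit), let s₀ ∈ (0, 1), and suppose h : [0, s₀] → [-1, 1] solves the transformed Jang equation dh/ds = F_c(s, h(s)) with h(0) = 0, |h(s)| < 1 for s ∈ [0, s₀), and h(s₀) = -1. Set u₀ := c(s₀ - 1)/2, and let f : [-c/2, u₀) → ℝ be the corresponding solution of Jang's equation on L_c with f(-c/2) = f'(-c/2) = 0, so that f'(u) = h(γ(u))/√(1 - h(γ(u))²) with γ(u) = (2/c)u + 1. Then the limit lim_{u → u₀⁻} f(u) exists and is finite; that is, the blowup solution f remains bounded while its derivative f' diverges at u₀. -/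
/-!
Since `h(s₀) = -1`, the equation gives `h'(s₀) = F_c(s₀, -1) = c²(s₀ - 1)/(8 m r_c(s₀)) < 0`, so
`1 + h(s) ≥ K (s₀ - s)` for `s` slightly below `s₀`. Near `u₀` we also have `-1 < h < 0`, and
`1 - h² ≥ 1 + h` then yields `-C/√(u₀ - u) ≤ f'(u) ≤ 0`. Hence `f` is antitone near `u₀` and stays
above the increasing function `f - 2C√(u₀ - ·)`, so it has a finite limit at `u₀`.
-/

open Set Filter Topology

lemma Fc_neg_one {m r : ℝ} (c s : ℝ) (hm : m ≠ 0) (hr : r ≠ 0) :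
    Fc m c s r (-1) = c ^ 2 * (s - 1) / (8 * m * r) := by
  unfold Fc; norm_num; field_simp; ring

lemma exists_pos_eventually_lt_of_hasDerivWithinAt_Iio {f : ℝ → ℝ} {f' b : ℝ}
    (hf : HasDerivWithinAt f f' (Iio b) b) (hf' : f' < 0) :
    ∃ K > 0, ∀ᶠ x in 𝓝[<] b, f b + K * (b - x) < f x := by
  refine ⟨-f' / 2, by linarith, ?_⟩
  have hslope := (hasDerivWithinAt_iff_tendsto_slope' self_notMem_Iio).mp hf
  filter_upwards [hslope.eventually_lt_const (show f' < -(-f' / 2) by linarith),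
    self_mem_nhdsWithin] with x hx hxb
  rw [slope_def_field, div_lt_iff_of_neg (sub_neg.mpr hxb)] at hx
  linarith

lemma neg_inv_sqrt_div_sqrt_le_div_sqrt_one_sub_sq {y κ t : ℝ} (hy : |y| < 1) (hκ : 0 < κ)
    (ht : 0 < t) (hκy : -1 + κ * t < y) : -((√κ)⁻¹ / √t) ≤ y / √(1 - y ^ 2) := by
  obtain ⟨hy₁, hy₂⟩ := abs_lt.mp hy
  have hpos : 0 < 1 - y ^ 2 := by nlinarith
  rw [div_eq_mul_inv, ← mul_inv, ← Real.sqrt_mul hκ.le]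
  rcases le_or_gt y 0 with hy0 | hy0
  · calc -(√(κ * t))⁻¹ ≤ -(√(1 - y ^ 2))⁻¹ := by
          gcongr
          nlinarith
      _ = -1 / √(1 - y ^ 2) := by rw [neg_div, one_div]
      _ ≤ y / √(1 - y ^ 2) := by gcongr
  · exact (neg_nonpos.mpr (by positivity)).trans (by positivity)

lemma tendsto_mul_add_nhdsLT {k : ℝ} (hk : 0 < k) (d x : ℝ) :
    Tendsto (fun u => k * u + d) (𝓝[<] x) (𝓝[<] (k * x + d)) :=
  (Continuous.continuousWithinAt (by fun_prop)).tendsto_nhdsWithin fun u (hu : u < x) =>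
    show k * u + d < k * x + d by gcongr

lemma hasDerivAt_sqrt_sub {b x : ℝ} (hx : x < b) :
    HasDerivAt (fun x => √(b - x)) (-1 / (2 * √(b - x))) x :=
  ((hasDerivAt_id' x).const_sub b).sqrt (sub_pos.mpr hx).ne'

lemma monotoneOn_sub_mul_sqrt_of_neg_div_sqrt_le {f f' : ℝ → ℝ} {a b C : ℝ}
    (hf : ∀ x ∈ Ioo a b, HasDerivAt f (f' x) x)
    (hbound : ∀ x ∈ Ioo a b, -(C / √(b - x)) ≤ f' x) :
    MonotoneOn (fun x => f x - 2 * C * √(b - x)) (Ioo a b) := by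
  have hG : ∀ x ∈ Ioo a b,
      HasDerivAt (fun x => f x - 2 * C * √(b - x)) (f' x + C / √(b - x)) x := by
    intro x hx
    refine ((hf x hx).sub ((hasDerivAt_sqrt_sub hx.2).const_mul (2 * C))).congr_deriv ?_
    have : √(b - x) ≠ 0 := (Real.sqrt_pos.mpr (sub_pos.mpr hx.2)).ne'
    field_simp
    ring
  refine monotoneOn_of_hasDerivWithinAt_nonneg (convex_Ioo a b)
    (fun x hx => (hG x hx).continuousAt.continuousWithinAt)
    (fun x hx => (hG x (interior_subset hx)).hasDerivWithinAt) fun x hx => ?_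
  rw [interior_Ioo] at hx
  linarith [hbound x hx]

lemma exists_tendsto_nhdsLT_of_deriv_nonpos_of_neg_div_sqrt_le {f f' : ℝ → ℝ} {b C : ℝ}
    (hC : 0 ≤ C) (hf : ∀ᶠ x in 𝓝[<] b,
      HasDerivAt f (f' x) x ∧ f' x ≤ 0 ∧ -(C / √(b - x)) ≤ f' x) :
    ∃ L, Tendsto f (𝓝[<] b) (𝓝 L) := by
  obtain ⟨a, hab, hsub⟩ := mem_nhdsLT_iff_exists_Ioo_subset.mp hf
  have hab : a < b := hab
  have hderiv : ∀ x ∈ Ioo a b, HasDerivAt f (f' x) x := fun x hx => (hsub hx).1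
  have hanti : AntitoneOn f (Ioo a b) :=
    antitoneOn_of_hasDerivWithinAt_nonpos (convex_Ioo a b)
      (fun x hx => (hderiv x hx).continuousAt.continuousWithinAt)
      (fun x hx => (hderiv x (interior_subset hx)).hasDerivWithinAt)
      (fun x hx => (hsub (interior_subset hx)).2.1)
  have hmono := monotoneOn_sub_mul_sqrt_of_neg_div_sqrt_le hderiv fun x hx => (hsub hx).2.2
  obtain ⟨a', haa', ha'b⟩ := exists_between hab
  have hsub' : Ioo a' b ⊆ Ioo a b := Ioo_subset_Ioo_left haa'.le
  have hbdd : BddBelow (f '' Ioo a' b) := by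
    refine ⟨f a' - 2 * C * √(b - a'), ?_⟩
    rintro _ ⟨x, hx, rfl⟩
    have hG : f a' - 2 * C * √(b - a') ≤ f x - 2 * C * √(b - x) :=
      hmono ⟨haa', ha'b⟩ (hsub' hx) hx.1.le
    nlinarith [Real.sqrt_nonneg (b - x)]
  exact ⟨_, (hanti.mono hsub').tendsto_nhdsWithin_Ioo_left (nonempty_Ioo.mpr ha'b) hbdd⟩

theorem blowup_solution_bounded_general (m c : ℝ) (hm : 0 < m) (hc : c ∈ Set.Ioo 0 (cCrit m))
    (Rc : ℝ → ℝ)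
    (hRc : ∀ s, 0 < Rc s ∧ phi m (Rc s) = c^2/4 * (s^2 - 1))
    (s₀ : ℝ) (hs₀ : s₀ ∈ Set.Ioo (0:ℝ) 1)
    (h : ℝ → ℝ)
    (hsol : ∀ s ∈ Set.Icc (0:ℝ) s₀,
      HasDerivWithinAt h (Fc m c s (Rc s) (h s)) (Set.Icc (0:ℝ) s₀) s)
    (hlt : ∀ s ∈ Set.Ico (0:ℝ) s₀, |h s| < 1)
    (hend : h s₀ = -1)
    (f f' : ℝ → ℝ)
    (hf'def : ∀ u, f' u = h ((2/c)*u + 1) / Real.sqrt (1 - (h ((2/c)*u + 1))^2))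
    (hf : ∀ u ∈ Set.Ico (-c/2) (c*(s₀-1)/2),
      HasDerivWithinAt f (f' u) (Set.Ico (-c/2) (c*(s₀-1)/2)) u) :
    ∃ L : ℝ, Filter.Tendsto f
      (nhdsWithin (c*(s₀-1)/2) (Set.Ico (-c/2) (c*(s₀-1)/2))) (nhds L) := by
  obtain ⟨hs₀0, hs₀1⟩ := hs₀
  have hc0 : 0 < c := hc.1
  have hderiv₀ : HasDerivWithinAt h (c ^ 2 * (s₀ - 1) / (8 * m * Rc s₀)) (Iio s₀) s₀ := by
    have := (hsol s₀ ⟨hs₀0.le, le_rfl⟩).mono_of_mem_nhdsWithin (Icc_mem_nhdsLT hs₀0)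
    rwa [hend, Fc_neg_one c s₀ hm.ne' (hRc s₀).1.ne'] at this
  obtain ⟨K, hK, hlow⟩ := exists_pos_eventually_lt_of_hasDerivWithinAt_Iio hderiv₀
    (div_neg_of_neg_of_pos (by nlinarith [pow_pos hc0 2]) (by nlinarith [(hRc s₀).1]))
  have hneg : ∀ᶠ s in 𝓝[<] s₀, h s < 0 :=
    (hend ▸ hderiv₀.continuousWithinAt.tendsto).eventually_lt_const (by norm_num)
  have hopen : ∀ᶠ s in 𝓝[<] s₀, |h s| < 1 := mem_of_superset (Ico_mem_nhdsLT hs₀0) hlt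
  set u₀ := c * (s₀ - 1) / 2 with hu₀
  have hγu₀ : 2 / c * u₀ + 1 = s₀ := by field_simp; ring
  have hγ : Tendsto (fun u => 2 / c * u + 1) (𝓝[<] u₀) (𝓝[<] s₀) :=
    hγu₀ ▸ tendsto_mul_add_nhdsLT (by positivity) 1 u₀
  have hu₀c : -c / 2 < u₀ := by nlinarith [mul_pos hc0 hs₀0, hu₀]
  have hfderiv : ∀ᶠ u in 𝓝[<] u₀, HasDerivAt f (f' u) u :=
    mem_of_superset (Ioo_mem_nhdsLT hu₀c) fun u hu =>
      (hf u (Ioo_subset_Ico_self hu)).hasDerivAt (Ico_mem_nhds hu.1 hu.2)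
  obtain ⟨L, hL⟩ := exists_tendsto_nhdsLT_of_deriv_nonpos_of_neg_div_sqrt_le
      (C := (√(2 * K / c))⁻¹) (by positivity) <| by
    filter_upwards [hγ.eventually (hneg.and (hlow.and hopen)), hfderiv, self_mem_nhdsWithin]
      with u ⟨hn, hl, ho⟩ hd (hu : u < u₀)
    have hs : K * (s₀ - (2 / c * u + 1)) = 2 * K / c * (u₀ - u) := by rw [← hγu₀]; ring
    refine ⟨hd, ?_, ?_⟩ <;> rw [hf'def]
    · exact div_nonpos_of_nonpos_of_nonneg hn.le (Real.sqrt_nonneg _)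
    · exact neg_inv_sqrt_div_sqrt_le_div_sqrt_one_sub_sq ho (by positivity) (sub_pos.mpr hu)
        (by rw [hs, hend] at hl; linarith)
  exact ⟨L, hL.mono_left (nhdsWithin_mono _ Ico_subset_Iio_self)⟩

/-- The blowup solution `f` remains bounded: the limit of `f(u)` as
`u → u₀⁻` (within the domain `[-c/2, u₀)`) exists and is finite. -/
theorem blowup_solution_bounded (m c : ℝ) (hm : 0 < m) (hc : c ∈ Set.Ioo 0 (cCrit m))
    (Rc : ℝ → ℝ)
    (hRc : ∀ s, 0 < Rc s ∧ phi m (Rc s) = c^2/4 * (s^2 - 1))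
    (s₀ : ℝ) (hs₀ : s₀ ∈ Set.Ioo (0:ℝ) 1)
    (h : ℝ → ℝ)
    (hrange : ∀ s ∈ Set.Icc (0:ℝ) s₀, h s ∈ Set.Icc (-1:ℝ) 1)
    (hsol : ∀ s ∈ Set.Icc (0:ℝ) s₀,
      HasDerivWithinAt h (Fc m c s (Rc s) (h s)) (Set.Icc (0:ℝ) s₀) s)
    (hinit : h 0 = 0)
    (hlt : ∀ s ∈ Set.Ico (0:ℝ) s₀, |h s| < 1)
    (hend : h s₀ = -1)
    (f f' : ℝ → ℝ)
    (hf'def : ∀ u, f' u = h ((2/c)*u + 1) / Real.sqrt (1 - (h ((2/c)*u + 1))^2))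
    (hf : ∀ u ∈ Set.Ico (-c/2) (c*(s₀-1)/2),
      HasDerivWithinAt f (f' u) (Set.Ico (-c/2) (c*(s₀-1)/2)) u)
    (hf0 : f (-c/2) = 0) :
    ∃ L : ℝ, Filter.Tendsto f
      (nhdsWithin (c*(s₀-1)/2) (Set.Ico (-c/2) (c*(s₀-1)/2))) (nhds L) :=
  blowup_solution_bounded_general m c hm hc Rc hRc s₀ hs₀ h hsol hlt hend f f' hf'def hf
end
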